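/- arXiv:2409.16276 — 3 statements merged into one kernel-verified Lean document; each statement's English description precedes it below -/
import Mathlib

section
/- The function g(t) = -log(η·(1/(2ν₁))e^{-t/ν₁} + (1-η)·(1/(2ν₀))e^{-t/ν₀}) is concave on [0,∞). -/
/-! Each summand `c * exp (-t / ν)` with `c > 0` is log-affine, and by the two-term Hölder
inequality a sum of log-convex functions is log-convex. Hence the mixture density is
log-convex on `[0, ∞)`, and its negative logarithm is concave. -/

open Real Set

theorem Real.rpow_mul_rpow_add_rpow_mul_rpow_le {a b p q r s : ℝ} (ha : 0 ≤ a) (hb : 0 ≤ b)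
    (hab : a + b = 1) (hp : 0 < p) (hq : 0 < q) (hr : 0 < r) (hs : 0 < s) :
    p ^ a * q ^ b + r ^ a * s ^ b ≤ (p + r) ^ a * (q + s) ^ b := by
  have hP : 0 < p + r := by positivity
  have hQ : 0 < q + s := by positivity
  have hscale : ∀ u v : ℝ, 0 < u → 0 < v →
      u ^ a * v ^ b = (p + r) ^ a * (q + s) ^ b * ((u / (p + r)) ^ a * (v / (q + s)) ^ b) := by
    intro u v hu hv
    rw [div_rpow hu.le hP.le, div_rpow hv.le hQ.le]
    field_simp
  have hamgm :
      (p / (p + r)) ^ a * (q / (q + s)) ^ b + (r / (p + r)) ^ a * (s / (q + s)) ^ b ≤ 1 := by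
    have h₁ := geom_mean_le_arith_mean2_weighted ha hb (by positivity : 0 ≤ p / (p + r))
      (by positivity : 0 ≤ q / (q + s)) hab
    have h₂ := geom_mean_le_arith_mean2_weighted ha hb (by positivity : 0 ≤ r / (p + r))
      (by positivity : 0 ≤ s / (q + s)) hab
    have hsum :
        a * (p / (p + r)) + b * (q / (q + s)) + (a * (r / (p + r)) + b * (s / (q + s))) = 1 := by
      field_simp
      linear_combination (p * q + p * s + q * r + s * r) * hab
    linarith
  calc p ^ a * q ^ b + r ^ a * s ^ b
      = (p + r) ^ a * (q + s) ^ b *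
        ((p / (p + r)) ^ a * (q / (q + s)) ^ b + (r / (p + r)) ^ a * (s / (q + s)) ^ b) := by
        rw [hscale p q hp hq, hscale r s hr hs]; ring
    _ ≤ (p + r) ^ a * (q + s) ^ b := by
        exact mul_le_of_le_one_right (by positivity) hamgm

section LogConvex

variable {E : Type*} [AddCommGroup E] [Module ℝ E] {s : Set E} {f g : E → ℝ}

theorem ConvexOn.le_rpow_mul_rpow_of_log (hf : ∀ x ∈ s, 0 < f x)
    (hlf : ConvexOn ℝ s fun x => log (f x)) {x y : E} (hx : x ∈ s) (hy : y ∈ s) {a b : ℝ}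
    (ha : 0 ≤ a) (hb : 0 ≤ b) (hab : a + b = 1) :
    f (a • x + b • y) ≤ f x ^ a * f y ^ b := by
  have hfx := hf x hx
  have hfy := hf y hy
  have hlog := hlf.2 hx hy ha hb hab
  simp only [smul_eq_mul] at hlog
  rwa [← log_le_log_iff (hf _ (hlf.1 hx hy ha hb hab)) (by positivity),
    log_mul (by positivity) (by positivity), log_rpow hfx, log_rpow hfy]

theorem ConvexOn.log_add (hf : ∀ x ∈ s, 0 < f x) (hg : ∀ x ∈ s, 0 < g x)
    (hlf : ConvexOn ℝ s fun x => log (f x)) (hlg : ConvexOn ℝ s fun x => log (g x)) :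
    ConvexOn ℝ s fun x => log (f x + g x) := by
  refine ⟨hlf.1, fun x hx y hy a b ha hb hab => ?_⟩
  have hfg : ∀ z ∈ s, 0 < f z + g z := fun z hz => add_pos (hf z hz) (hg z hz)
  have hle : f (a • x + b • y) + g (a • x + b • y) ≤ (f x + g x) ^ a * (f y + g y) ^ b :=
    calc f (a • x + b • y) + g (a • x + b • y)
        ≤ f x ^ a * f y ^ b + g x ^ a * g y ^ b :=
          add_le_add (hlf.le_rpow_mul_rpow_of_log hf hx hy ha hb hab)
            (hlg.le_rpow_mul_rpow_of_log hg hx hy ha hb hab)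
      _ ≤ (f x + g x) ^ a * (f y + g y) ^ b :=
          rpow_mul_rpow_add_rpow_mul_rpow_le ha hb hab (hf x hx) (hf y hy) (hg x hx) (hg y hy)
  calc log (f (a • x + b • y) + g (a • x + b • y))
      ≤ log ((f x + g x) ^ a * (f y + g y) ^ b) := log_le_log (hfg _ (hlf.1 hx hy ha hb hab)) hle
    _ = a • log (f x + g x) + b • log (f y + g y) := by
        rw [log_mul (rpow_pos_of_pos (hfg x hx) a).ne' (rpow_pos_of_pos (hfg y hy) b).ne',
          log_rpow (hfg x hx), log_rpow (hfg y hy), smul_eq_mul, smul_eq_mul]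

theorem ConvexOn.log_mul_exp {c : ℝ} (hc : 0 < c) {u : E → ℝ} (hu : ConvexOn ℝ s u) :
    ConvexOn ℝ s fun x => log (c * exp (u x)) :=
  (hu.add_const (log c)).congr fun x _ => by
    simp only [Pi.add_apply, log_mul hc.ne' (exp_pos _).ne', log_exp, add_comm]

end LogConvex

theorem spike_slab_penalty_concave (ν₀ ν₁ η : ℝ)
    (hν₀ : 0 < ν₀) (hν₁ : 0 < ν₁) (hη₀ : 0 < η) (hη₁ : η < 1) :
    ConcaveOn ℝ (Set.Ici (0 : ℝ))
      (fun t : ℝ => -Real.log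
        (η * (1 / (2 * ν₁)) * Real.exp (-t / ν₁)
          + (1 - η) * (1 / (2 * ν₀)) * Real.exp (-t / ν₀))) := by
  have hlinear : ∀ ν : ℝ, ConvexOn ℝ (Ici 0) fun t : ℝ => -t / ν := fun ν =>
    ((LinearMap.lsmul ℝ ℝ (-ν⁻¹)).convexOn (convex_Ici 0)).congr fun t _ => by
      simp only [LinearMap.lsmul_apply, smul_eq_mul]; ring
  have hc₁ : 0 < η * (1 / (2 * ν₁)) := by positivity
  have hc₀ : 0 < (1 - η) * (1 / (2 * ν₀)) := mul_pos (sub_pos.2 hη₁) (by positivity)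
  have hslab := (hlinear ν₁).log_mul_exp hc₁
  have hspike := (hlinear ν₀).log_mul_exp hc₀
  exact (hslab.log_add (fun _ _ => by positivity) (fun _ _ => by positivity) hspike).neg
end

section
/- Let f: ℝ^d → ℝ be differentiable, and suppose for parameter Δ with Φ = Φ⁰ + Δ we have the strong convexity lower bound f(Φ⁰+Δ) - f(Φ⁰) ≥ ⟨∇f(Φ⁰), Δ⟩ + β‖Δ‖² with β > 0, and the gradient bound ‖∇f(Φ⁰)‖_∞ ≤ γ. If additionally 0 ≥ f(Φ⁰+Δ) - f(Φ⁰) + (1/ν₁)‖Δ_{S^c}‖₁ - (1/ν₀)‖Δ_S‖₁ for an index set S, and 1/ν₁ ≥ 2γ, then β‖Δ‖² ≤ (γ + 1/ν₀)‖Δ_S‖₁, and consequently ‖Δ‖ ≤ (γ + 1/ν₀)√|S| / β. -/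
/-!
Write `A = ‖Δ_S‖₁`, `B = ‖Δ_{Sᶜ}‖₁`. By Hölder, `⟨g, Δ⟩ ≥ -γ (A + B)`, so the strong convexity
bound and the penalty inequality give `β‖Δ‖² ≤ (γ + 1/ν₀) A + (γ - 1/ν₁) B`, and the last term is
nonpositive since `1/ν₁ ≥ 2γ ≥ γ`. Cauchy–Schwarz `A ≤ √|S| ‖Δ‖` then turns the quadratic bound
into the linear one after dividing by `‖Δ‖`.
-/

open Finset

theorem abs_sum_mul_le_mul_sum_abs {ι : Type*} (s : Finset ι) {g x : ι → ℝ} {γ : ℝ}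
    (hg : ∀ i ∈ s, |g i| ≤ γ) : |∑ i ∈ s, g i * x i| ≤ γ * ∑ i ∈ s, |x i| :=
  calc |∑ i ∈ s, g i * x i| ≤ ∑ i ∈ s, |g i| * |x i| := by
        simpa only [abs_mul] using abs_sum_le_sum_abs (fun i => g i * x i) s
    _ ≤ ∑ i ∈ s, γ * |x i| := sum_le_sum fun i hi => by gcongr; exact hg i hi
    _ = γ * ∑ i ∈ s, |x i| := (mul_sum ..).symm

theorem sum_abs_le_sqrt_card_mul_sqrt_sum_sq {ι : Type*} [Fintype ι] (s : Finset ι)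
    (x : ι → ℝ) : ∑ i ∈ s, |x i| ≤ √(#s : ℝ) * √(∑ i, x i ^ 2) := by
  rw [← Real.sqrt_mul (Nat.cast_nonneg _),
    ← Real.sqrt_sq (sum_nonneg fun i _ => abs_nonneg (x i))]
  gcongr
  calc (∑ i ∈ s, |x i|) ^ 2 ≤ #s * ∑ i ∈ s, |x i| ^ 2 := sq_sum_le_card_mul_sum_sq
    _ ≤ #s * ∑ i, x i ^ 2 := by
        simp only [sq_abs]
        gcongr
        exact subset_univ s

theorem le_mul_div_of_mul_sq_le {β C k A r : ℝ} (hβ : 0 < β) (hC : 0 ≤ C) (hk : 0 ≤ k)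
    (hr : 0 ≤ r) (hquad : β * r ^ 2 ≤ C * A) (hA : A ≤ k * r) : r ≤ C * k / β := by
  rcases hr.eq_or_lt with rfl | hr
  · positivity
  have hcancel : r * (β * r) ≤ r * (C * k) :=
    calc r * (β * r) = β * r ^ 2 := by ring
      _ ≤ C * A := hquad
      _ ≤ C * (k * r) := by gcongr
      _ = r * (C * k) := by ring
  rw [le_div_iff₀ hβ, mul_comm]
  exact le_of_mul_le_mul_left hcancel hr

theorem strong_convexity_error_bound_general (d : ℕ) (f : (Fin d → ℝ) → ℝ)
    (Φ Δ g : Fin d → ℝ) (S : Finset (Fin d)) (β γ ν₀ ν₁ : ℝ)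
    (hβ : 0 < β) (hγ : 0 ≤ γ) (hν₀ : 0 < ν₀)
    (hsc : f (Φ + Δ) - f Φ ≥ (∑ i, g i * Δ i) + β * ∑ i, (Δ i) ^ 2)
    (hsup : ∀ i, |g i| ≤ γ)
    (hpen : 0 ≥ f (Φ + Δ) - f Φ
        + (1 / ν₁) * ∑ i ∈ Sᶜ, |Δ i| - (1 / ν₀) * ∑ i ∈ S, |Δ i|)
    (hν : 1 / ν₁ ≥ 2 * γ) :
    β * ∑ i, (Δ i) ^ 2 ≤ (γ + 1 / ν₀) * ∑ i ∈ S, |Δ i| ∧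
    Real.sqrt (∑ i, (Δ i) ^ 2) ≤ (γ + 1 / ν₀) * Real.sqrt S.card / β := by
  have hholder : |∑ i, g i * Δ i| ≤ γ * ((∑ i ∈ S, |Δ i|) + ∑ i ∈ Sᶜ, |Δ i|) := by
    rw [sum_add_sum_compl]
    exact abs_sum_mul_le_mul_sum_abs _ fun i _ => hsup i
  have hcompl : γ * ∑ i ∈ Sᶜ, |Δ i| ≤ (1 / ν₁) * ∑ i ∈ Sᶜ, |Δ i| := by
    gcongr
    linarith
  have hquad : β * ∑ i, (Δ i) ^ 2 ≤ (γ + 1 / ν₀) * ∑ i ∈ S, |Δ i| := by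
    linarith [neg_abs_le (∑ i, g i * Δ i)]
  refine ⟨hquad, le_mul_div_of_mul_sq_le hβ (by positivity) (Real.sqrt_nonneg _)
    (Real.sqrt_nonneg _) ?_ (sum_abs_le_sqrt_card_mul_sqrt_sum_sq S Δ)⟩
  rwa [Real.sq_sqrt (sum_nonneg fun i _ => sq_nonneg (Δ i))]

theorem strong_convexity_error_bound (d : ℕ) (f : (Fin d → ℝ) → ℝ)
    (Φ Δ g : Fin d → ℝ) (S : Finset (Fin d)) (β γ ν₀ ν₁ : ℝ)
    (hβ : 0 < β) (hγ : 0 ≤ γ) (hν₀ : 0 < ν₀) (hν₁ : 0 < ν₁)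
    (hdiff : Differentiable ℝ f)
    (hgrad : ∀ v : Fin d → ℝ, fderiv ℝ f Φ v = ∑ i, g i * v i)
    (hsc : f (Φ + Δ) - f Φ ≥ (∑ i, g i * Δ i) + β * ∑ i, (Δ i) ^ 2)
    (hsup : ∀ i, |g i| ≤ γ)
    (hpen : 0 ≥ f (Φ + Δ) - f Φ
        + (1 / ν₁) * ∑ i ∈ Sᶜ, |Δ i| - (1 / ν₀) * ∑ i ∈ S, |Δ i|)
    (hν : 1 / ν₁ ≥ 2 * γ) :
    β * ∑ i, (Δ i) ^ 2 ≤ (γ + 1 / ν₀) * ∑ i ∈ S, |Δ i| ∧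
    Real.sqrt (∑ i, (Δ i) ^ 2) ≤ (γ + 1 / ν₀) * Real.sqrt S.card / β :=
  strong_convexity_error_bound_general d f Φ Δ g S β γ ν₀ ν₁ hβ hγ hν₀ hsc hsup hpen hν
end

section
/- Let B = -Λ⁻¹Θᵀ and B⁰ = -(Λ⁰)⁻¹(Θ⁰)ᵀ with Λ, Λ⁰ invertible. If ‖Θ - Θ⁰‖_F ≤ ε, ‖Λ - Λ⁰‖_F ≤ ε, F_Λ := ‖(Λ⁰)⁻¹‖_F, F_Θ := ‖Θ⁰‖_F, and F_Λ·ε < 1, then ‖B - B⁰‖_F ≤ (F_Λ ε/(1 - F_Λ ε))(1 + F_Λ F_Θ). -/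
/-! The error splits as `B - B⁰ = -(Λ⁻¹ - Λ₀⁻¹)Θᵀ - Λ₀⁻¹(Θ - Θ₀)ᵀ`. Since
`Λ⁻¹ - Λ₀⁻¹ = Λ⁻¹(Λ₀ - Λ)Λ₀⁻¹`, the inverse error `d` satisfies `d ≤ (F_Λ + d) ε F_Λ`, i.e.
`d ≤ F_Λ² ε / (1 - F_Λ ε)`. Submultiplicativity of the Frobenius norm and `‖Θ‖ ≤ F_Θ + ε` then
bound `‖B - B⁰‖` by `d (F_Θ + ε) + F_Λ ε`, which with the bound on `d` is exactly the claim. -/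

open Matrix

noncomputable def frob {m n : ℕ} (A : Matrix (Fin m) (Fin n) ℝ) : ℝ :=
  Real.sqrt (∑ i, ∑ j, (A i j) ^ 2)

theorem norm_inv_sub_inv_le {R : Type*} [SeminormedRing R] {a b a' b' : R}
    (ha : a' * a = 1) (hb : b * b' = 1) {ε : ℝ} (hab : ‖a - b‖ ≤ ε)
    (hsmall : ‖b'‖ * ε < 1) :
    ‖a' - b'‖ ≤ ‖b'‖ ^ 2 * ε / (1 - ‖b'‖ * ε) := by
  have hid : a' - b' = a' * (b - a) * b' := by
    rw [mul_sub, sub_mul, ha, one_mul, mul_assoc, hb, mul_one]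
  have ha' : ‖a'‖ ≤ ‖b'‖ + ‖a' - b'‖ := by
    simpa using norm_le_insert' a' b'
  have hrec : ‖a' - b'‖ ≤ (‖b'‖ + ‖a' - b'‖) * ε * ‖b'‖ :=
    calc ‖a' - b'‖ ≤ ‖a'‖ * ‖b - a‖ * ‖b'‖ := hid ▸ norm_mul₃_le
      _ ≤ (‖b'‖ + ‖a' - b'‖) * ε * ‖b'‖ := by
        rw [norm_sub_rev] at hab
        gcongr
  rw [le_div_iff₀ (by linarith)]
  nlinarith [norm_nonneg b']

attribute [local instance] frobeniusSeminormedAddCommGroup frobeniusNormedRing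

namespace Matrix

theorem frobenius_norm_mul_sub_mul_le {𝕜 l m n : Type*} [RCLike 𝕜] [Fintype l] [Fintype m]
    [Fintype n] (A A₀ : Matrix l m 𝕜) (B B₀ : Matrix m n 𝕜) :
    ‖A * B - A₀ * B₀‖ ≤ ‖A - A₀‖ * ‖B‖ + ‖A₀‖ * ‖B - B₀‖ :=
  calc ‖A * B - A₀ * B₀‖ = ‖(A - A₀) * B + A₀ * (B - B₀)‖ := by
        rw [Matrix.sub_mul, Matrix.mul_sub, sub_add_sub_cancel]
    _ ≤ ‖A - A₀‖ * ‖B‖ + ‖A₀‖ * ‖B - B₀‖ :=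
        (norm_add_le _ _).trans (add_le_add (frobenius_norm_mul _ _) (frobenius_norm_mul _ _))

end Matrix

theorem frob_eq_norm {m n : ℕ} (A : Matrix (Fin m) (Fin n) ℝ) : frob A = ‖A‖ := by
  rw [frob, frobenius_norm_def, ← Real.sqrt_eq_rpow]
  simp_rw [Real.norm_eq_abs, Real.rpow_two, sq_abs]

theorem plugin_B_error_bound (p q : ℕ)
    (Θ Θ₀ : Matrix (Fin q) (Fin p) ℝ) (Λ Λ₀ : Matrix (Fin p) (Fin p) ℝ)
    (ε : ℝ) (hΛ : IsUnit Λ.det) (hΛ₀ : IsUnit Λ₀.det)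
    (hΘ : frob (Θ - Θ₀) ≤ ε) (hΛd : frob (Λ - Λ₀) ≤ ε)
    (hsmall : frob Λ₀⁻¹ * ε < 1) :
    frob (-(Λ⁻¹ * Θᵀ) - -(Λ₀⁻¹ * Θ₀ᵀ))
      ≤ (frob Λ₀⁻¹ * ε / (1 - frob Λ₀⁻¹ * ε)) * (1 + frob Λ₀⁻¹ * frob Θ₀) := by
  simp only [frob_eq_norm] at *
  have hinv := norm_inv_sub_inv_le (Λ.nonsing_inv_mul hΛ) (Λ₀.mul_nonsing_inv hΛ₀) hΛd hsmall
  have hΘnorm : ‖Θ‖ ≤ ‖Θ₀‖ + ε := by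
    linarith [norm_sub_norm_le Θ Θ₀]
  have hden : 1 - ‖Λ₀⁻¹‖ * ε ≠ 0 := by linarith
  calc ‖-(Λ⁻¹ * Θᵀ) - -(Λ₀⁻¹ * Θ₀ᵀ)‖ = ‖Λ⁻¹ * Θᵀ - Λ₀⁻¹ * Θ₀ᵀ‖ := by
        rw [neg_sub_neg, norm_sub_rev]
    _ ≤ ‖Λ⁻¹ - Λ₀⁻¹‖ * ‖Θ‖ + ‖Λ₀⁻¹‖ * ‖Θ - Θ₀‖ := by
        simpa only [← transpose_sub, frobenius_norm_transpose]
          using frobenius_norm_mul_sub_mul_le Λ⁻¹ Λ₀⁻¹ Θᵀ Θ₀ᵀ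
    _ ≤ ‖Λ₀⁻¹‖ ^ 2 * ε / (1 - ‖Λ₀⁻¹‖ * ε) * (‖Θ₀‖ + ε) + ‖Λ₀⁻¹‖ * ε := by
        have : 0 ≤ ε := (norm_nonneg _).trans hΘ
        gcongr
    _ = ‖Λ₀⁻¹‖ * ε / (1 - ‖Λ₀⁻¹‖ * ε) * (1 + ‖Λ₀⁻¹‖ * ‖Θ₀‖) := by
        field_simp
        ring
end
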